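/- arXiv:2204.09878 — 8 statements merged into one kernel-verified Lean document; each statement's English description precedes it below -/
import Mathlib

section
/- Let G be a totally disconnected locally compact group. The collection W(G) consisting of the empty set together with all compact open cosets of compact open subgroups of G, equipped with set intersection, the inverse map A ↦ A⁻¹, and the partial product A·B defined exactly when A is a left coset of a compact open subgroup V and B is a right coset of that same V (in which case A·B is the usual product set AB), forms a groupoid: associativity holds with both sides defined or undefined simultaneously, A·A⁻¹ and A⁻¹·A are always defined for nonempty A, and if A·B is defined then A·B·B⁻¹ = A and A⁻¹·A·B = B. -/
open Pointwise

variable {G : Type*}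

/-- A compact open subgroup. -/
def IsCO [Group G] [TopologicalSpace G] (V : Subgroup G) : Prop :=
  IsCompact (V : Set G) ∧ IsOpen (V : Set G)

/-- A compact open coset: a (left) coset of a compact open subgroup. -/
def IsCOC [Group G] [TopologicalSpace G] (A : Set G) : Prop :=
  ∃ V : Subgroup G, IsCO V ∧ ∃ g : G, A = {g} * (V : Set G)

/-- The partial product `A·B` of the meet groupoid is defined exactly when `A` is a
left coset of a compact open subgroup `V` of which `B` is a right coset. -/
def ProdDef [Group G] [TopologicalSpace G] (A B : Set G) : Prop :=
  ∃ V : Subgroup G, IsCO V ∧ (∃ g : G, A = {g} * (V : Set G)) ∧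
    (∃ h : G, B = (V : Set G) * {h})

section Helpers

variable [Group G]

lemma sing_mul_sub (V : Subgroup G) {v : G} (hv : v ∈ V) : ({v} : Set G) * V = V := by
  rw [Set.singleton_mul]
  exact Set.ext fun x => ⟨by rintro ⟨y, hy, rfl⟩; exact V.mul_mem hv hy,
    fun hx => ⟨v⁻¹ * x, V.mul_mem (V.inv_mem hv) hx, by group⟩⟩

lemma sub_mul_sing (V : Subgroup G) {v : G} (hv : v ∈ V) : (V : Set G) * {v} = V := by
  rw [Set.mul_singleton]
  exact Set.ext fun x => ⟨by rintro ⟨y, hy, rfl⟩; exact V.mul_mem hy hv,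
    fun hx => ⟨x * v⁻¹, V.mul_mem hx (V.inv_mem hv), by group⟩⟩

lemma mul_coset (V : Subgroup G) (g h : G) :
    (({g} : Set G) * V) * ((V : Set G) * {h}) = {g} * (V : Set G) * {h} := by
  rw [mul_assoc, ← mul_assoc (V : Set G), coe_mul_coe, ← mul_assoc]

lemma lconj (V : Subgroup G) (h : G) :
    ({h} : Set G) * (({h⁻¹} : Set G) * V * {h}) = (V : Set G) * {h} := by
  rw [← mul_assoc, ← mul_assoc, Set.singleton_mul_singleton, mul_inv_cancel,
    Set.singleton_one, one_mul]

lemma rconj (V : Subgroup G) (b : G) :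
    (({b} : Set G) * V * {b⁻¹}) * {b} = ({b} : Set G) * V := by
  rw [mul_assoc, Set.singleton_mul_singleton, inv_mul_cancel, Set.singleton_one, mul_one]

lemma coset_eq {V W : Subgroup G} {g h g' : G}
    (hW : ({g'} : Set G) * W = {g} * (V : Set G) * {h}) :
    (W : Set G) = {h⁻¹} * (V : Set G) * {h} := by
  have hg' : g' ∈ ({g} : Set G) * V * {h} := by
    rw [← hW]
    simpa using Set.mul_mem_mul (Set.mem_singleton g') W.one_mem
  obtain ⟨y, hy, z, hz, hyz⟩ := hg'
  obtain ⟨p, hp, v, hv, rfl⟩ := hy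
  rw [Set.mem_singleton_iff] at hp hz
  have hg'eq : g' = g * v * h := by rw [← hyz, hp, hz]
  subst hg'eq
  have : (W : Set G) = {(g * v * h)⁻¹} * ({g * v * h} * (W : Set G)) := by
    rw [← mul_assoc, Set.singleton_mul_singleton, inv_mul_cancel, Set.singleton_one, one_mul]
  rw [this, hW, ← mul_assoc, ← mul_assoc, Set.singleton_mul_singleton]
  have : (g * v * h)⁻¹ * g = h⁻¹ * v⁻¹ := by group
  rw [this, ← Set.singleton_mul_singleton, mul_assoc ({h⁻¹} : Set G),
    sing_mul_sub V (V.inv_mem hv)]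

lemma coset_eq' {V W : Subgroup G} {b c k : G}
    (hW : (W : Set G) * {k} = {b} * (V : Set G) * {c}) :
    (W : Set G) = {b} * (V : Set G) * {b⁻¹} := by
  have hk : k ∈ ({b} : Set G) * V * {c} := by
    rw [← hW]
    simpa using Set.mul_mem_mul W.one_mem (Set.mem_singleton k)
  obtain ⟨y, hy, z, hz, hyz⟩ := hk
  obtain ⟨p, hp, v, hv, rfl⟩ := hy
  rw [Set.mem_singleton_iff] at hp hz
  have hkeq : k = b * v * c := by rw [← hyz, hp, hz]
  subst hkeq
  have : (W : Set G) = ((W : Set G) * {b * v * c}) * {(b * v * c)⁻¹} := by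
    rw [mul_assoc, Set.singleton_mul_singleton, mul_inv_cancel, Set.singleton_one, mul_one]
  rw [this, hW, mul_assoc, Set.singleton_mul_singleton]
  have : c * (b * v * c)⁻¹ = v⁻¹ * b⁻¹ := by group
  rw [this, ← Set.singleton_mul_singleton, ← mul_assoc, mul_assoc ({b} : Set G),
    sub_mul_sing V (V.inv_mem hv)]

end Helpers

section TopHelpers

variable [Group G] [TopologicalSpace G] [IsTopologicalGroup G]

lemma conj_subgroup (V : Subgroup G) (c : G) (hV : IsCO V) :
    ∃ W : Subgroup G, IsCO W ∧ (W : Set G) = {c} * (V : Set G) * {c⁻¹} := by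
  refine ⟨(MulAut.conj c) • V, ?_, ?_⟩
  · constructor
    · rw [Subgroup.coe_pointwise_smul]
      have : (MulAut.conj c) • (V : Set G) = (fun x => c * x * c⁻¹) '' V := rfl
      rw [this]
      exact hV.1.image (by continuity)
    · rw [Subgroup.coe_pointwise_smul]
      have : (MulAut.conj c) • (V : Set G) = (fun x => c * x * c⁻¹) '' V := rfl
      rw [this]
      have : (fun x => c * x * c⁻¹) '' (V : Set G) =
          ((Homeomorph.mulLeft c).trans (Homeomorph.mulRight c⁻¹)) '' V := rfl
      rw [this]
      exact ((Homeomorph.mulLeft c).trans (Homeomorph.mulRight c⁻¹)).isOpenMap _ hV.2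
  · rw [Subgroup.coe_pointwise_smul, Set.singleton_mul, Set.mul_singleton, Set.image_image]
    rfl

end TopHelpers

/-- The compact open cosets of a t.d.l.c. group `G`, with set intersection, pointwise
inverse and the partial product `A·B` (defined exactly when `A` is a left coset of a
compact open subgroup `V` and `B` a right coset of the same `V`, in which case it is the
product set `AB`) form a groupoid: associativity holds, with both sides defined or
undefined simultaneously; `A·A⁻¹` and `A⁻¹·A` are always defined; and if `A·B` is
defined then `A·B·B⁻¹ = A` and `A⁻¹·A·B = B`. -/
theorem stmt_1 [Group G] [TopologicalSpace G] [IsTopologicalGroup G]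
    [LocallyCompactSpace G] [TotallyDisconnectedSpace G] [T2Space G] :
    (∀ A B C : Set G, IsCOC A → IsCOC B → IsCOC C →
      ((ProdDef A B ∧ ProdDef (A * B) C) ↔ (ProdDef B C ∧ ProdDef A (B * C)))) ∧
    (∀ A B C : Set G, (A * B) * C = A * (B * C)) ∧
    (∀ A : Set G, IsCOC A → ProdDef A A⁻¹ ∧ ProdDef A⁻¹ A) ∧
    (∀ A B : Set G, ProdDef A B → ((A * B) * B⁻¹ = A ∧ A⁻¹ * (A * B) = B)) := by
  refine ⟨?_, fun A B C => mul_assoc A B C, ?_, ?_⟩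
  · rintro A B C _ _ _
    constructor
    · rintro ⟨⟨V, hV, ⟨g, hA⟩, ⟨h, hB⟩⟩, ⟨W, hW, ⟨g', hAB⟩, ⟨h', hC⟩⟩⟩
      have key : ({g'} : Set G) * W = {g} * (V : Set G) * {h} := by
        rw [← hAB, hA, hB, mul_coset]
      have hWset : (W : Set G) = {h⁻¹} * (V : Set G) * {h} := coset_eq key
      have hBW : ({h} : Set G) * W = (V : Set G) * {h} := by rw [hWset, lconj]
      refine ⟨⟨W, hW, ⟨h, by rw [hB, ← hBW]⟩, ⟨h', hC⟩⟩,
        ⟨V, hV, ⟨g, hA⟩, ⟨h * h', ?_⟩⟩⟩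
      rw [hB, hC, ← mul_assoc, mul_assoc (V : Set G) {h} (W : Set G), hBW,
        ← mul_assoc, coe_mul_coe, mul_assoc, Set.singleton_mul_singleton]
    · rintro ⟨⟨V, hV, ⟨b, hB⟩, ⟨c, hC⟩⟩, ⟨W, hW, ⟨a, hA⟩, ⟨k, hBC⟩⟩⟩
      have key : (W : Set G) * {k} = {b} * (V : Set G) * {c} := by
        rw [← hBC, hB, hC, mul_coset]
      have hWset : (W : Set G) = {b} * (V : Set G) * {b⁻¹} := coset_eq' key
      have hWB : (W : Set G) * {b} = ({b} : Set G) * V := by rw [hWset, rconj]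
      refine ⟨⟨W, hW, ⟨a, hA⟩, ⟨b, by rw [hB, ← hWB]⟩⟩,
        ⟨V, hV, ⟨a * b, ?_⟩, ⟨c, hC⟩⟩⟩
      rw [hA, hB, ← hWB, mul_coset, mul_assoc, hWB, ← mul_assoc,
        Set.singleton_mul_singleton]
  · rintro A ⟨V, hV, g, hA⟩
    have hAinv : A⁻¹ = (V : Set G) * {g⁻¹} := by
      rw [hA, mul_inv_rev, Set.inv_singleton, inv_coe_set]
    obtain ⟨W, hWco, hWset⟩ := conj_subgroup V g hV
    refine ⟨⟨V, hV, ⟨g, hA⟩, ⟨g⁻¹, hAinv⟩⟩, ⟨W, hWco, ⟨g⁻¹, ?_⟩, ⟨g, ?_⟩⟩⟩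
    · rw [hAinv, hWset]
      have := lconj V g⁻¹
      rw [inv_inv] at this
      rw [this]
    · rw [hA, hWset, rconj]
  · rintro A B ⟨V, hV, ⟨g, hA⟩, ⟨h, hB⟩⟩
    have hABset : A * B = {g} * (V : Set G) * {h} := by rw [hA, hB, mul_coset]
    have hAinv : A⁻¹ = (V : Set G) * {g⁻¹} := by
      rw [hA, mul_inv_rev, Set.inv_singleton, inv_coe_set]
    have hBinv : B⁻¹ = ({h⁻¹} : Set G) * V := by
      rw [hB, mul_inv_rev, Set.inv_singleton, inv_coe_set]
    constructor
    · rw [hABset, hBinv, hA, mul_assoc, ← mul_assoc ({h} : Set G),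
        Set.singleton_mul_singleton, mul_inv_cancel, Set.singleton_one, one_mul,
        mul_assoc, coe_mul_coe]
    · rw [hABset, hAinv, hB, mul_assoc ({g} : Set G) (V : Set G) ({h} : Set G),
        mul_assoc (V : Set G) ({g⁻¹} : Set G), ← mul_assoc ({g⁻¹} : Set G) ({g} : Set G),
        Set.singleton_mul_singleton, inv_mul_cancel, Set.singleton_one, one_mul,
        ← mul_assoc, coe_mul_coe]
end

section
/- Let G be a t.d.l.c. group, let W(G) be its meet groupoid of compact open cosets, and for g ∈ G define Φ(g) : W(G) → W(G) by Φ(g)(A) = gA. Then Φ(g) is a bijection of W(G) preserving intersections, and Φ(g)(A)·B = Φ(g)(A·B) whenever A·B is defined; moreover the map Φ : G → Sym(W(G)) is an injective group homomorphism. -/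
open Pointwise

variable {G : Type*}

/-- The domain `W(G)` of the meet groupoid: compact open cosets together with `∅`. -/
abbrev MeetGroupoid (G : Type*) [Group G] [TopologicalSpace G] :=
  {A : Set G // A = ∅ ∨ IsCOC A}

section Aux

open Set Filter Topology TopologicalGroup

variable [Group G] [TopologicalSpace G]

/-- Adaptation of `TopologicalGroup.exist_mul_closure_nhd` to a compact open set
in a not-necessarily-compact group. -/
lemma aux_exist_mul_closure_nhd [IsTopologicalGroup G] {W : Set G} (Wc : IsCompact W)
    (Wo : IsOpen W) : ∃ T ∈ 𝓝 (1 : G), W * T ⊆ W := by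
  apply Wc.induction_on (p := fun S ↦ ∃ T ∈ 𝓝 (1 : G), S * T ⊆ W)
    ⟨Set.univ, by simp only [univ_mem, Set.empty_mul, empty_subset, and_self]⟩
    (fun _ _ huv ⟨T, hT, mem⟩ ↦ ⟨T, hT, (Set.mul_subset_mul_right huv).trans mem⟩)
    fun U V ⟨T₁, hT₁, mem1⟩ ⟨T₂, hT₂, mem2⟩ ↦ ⟨T₁ ∩ T₂, inter_mem hT₁ hT₂, by
      rw [Set.union_mul]
      exact union_subset (Set.mul_subset_mul_left inter_subset_left |>.trans mem1)
        (Set.mul_subset_mul_left inter_subset_right |>.trans mem2)⟩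
  intro x memW
  have : (x, 1) ∈ (fun p : G × G ↦ p.1 * p.2) ⁻¹' W := by simp [memW]
  rcases isOpen_prod_iff.mp (continuous_mul.isOpen_preimage W Wo) x 1 this with
    ⟨U, V, Uopen, Vopen, xmemU, onememV, prodsub⟩
  have h6 : U * V ⊆ W := Set.mul_subset_iff.mpr (fun _ hx _ hy ↦ prodsub (mk_mem_prod hx hy))
  exact ⟨U ∩ W, ⟨U, Uopen.mem_nhds xmemU, W, fun _ a ↦ a, rfl⟩,
    V, IsOpen.mem_nhds Vopen onememV, fun _ a ↦ h6 ((Set.mul_subset_mul_right inter_subset_left) a)⟩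

lemma aux_exists_mulInvClosureNhd [IsTopologicalGroup G] {W : Set G} (Wc : IsCompact W)
    (Wo : IsOpen W) : ∃ T, IsTopologicalGroup.mulInvClosureNhd T W := by
  rcases aux_exist_mul_closure_nhd Wc Wo with ⟨S, Smemnhds, mulclose⟩
  rcases mem_nhds_iff.mp Smemnhds with ⟨U, UsubS, Uopen, onememU⟩
  refine ⟨U ∩ U⁻¹, ?_, by simp [inter_comm], Uopen.inter Uopen.inv, ?_⟩
  · simp [Uopen.mem_nhds onememU, inv_mem_nhds_one]
  · exact fun a ha ↦ mulclose (Set.mul_subset_mul_left UsubS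
      (Set.mul_subset_mul_left inter_subset_left ha))

/-- Van Dantzig: in any compact open neighbourhood of `1` there is a compact open subgroup. -/
lemma aux_vanDantzig [IsTopologicalGroup G] {W : Set G} (Wc : IsCompact W) (Wo : IsOpen W)
    (einW : (1 : G) ∈ W) : ∃ S : Subgroup G, IsCO S ∧ (S : Set G) ⊆ W := by
  rcases aux_exists_mulInvClosureNhd Wc Wo with ⟨V, hV⟩
  let S : Subgroup G := {
    carrier := ⋃ n, V ^ (n + 1)
    mul_mem' := fun ha hb ↦ by
      rcases mem_iUnion.mp ha with ⟨k, hk⟩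
      rcases mem_iUnion.mp hb with ⟨l, hl⟩
      apply mem_iUnion.mpr
      use k + 1 + l
      rw [add_assoc, pow_add]
      exact Set.mul_mem_mul hk hl
    one_mem' := by
      apply mem_iUnion.mpr
      use 0
      simp [mem_of_mem_nhds hV.nhds]
    inv_mem' := fun ha ↦ by
      rcases mem_iUnion.mp ha with ⟨k, hk⟩
      apply mem_iUnion.mpr
      use k
      rw [← hV.inv]
      simpa only [inv_pow, Set.mem_inv, inv_inv] using hk }
  have Sopen : IsOpen (⋃ n, V ^ (n + 1)) := by
    refine isOpen_iUnion (fun n ↦ ?_)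
    rw [pow_succ]
    exact hV.isOpen.mul_left
  have mulVpow (n : ℕ) : W * V ^ (n + 1) ⊆ W := by
    induction' n with n ih
    · simp [hV.mul]
    · rw [pow_succ, ← mul_assoc]
      exact (Set.mul_subset_mul_right ih).trans hV.mul
  have hsub : (S : Set G) ⊆ W := by
    refine iUnion_subset fun n x hx ↦ mulVpow n ?_
    exact ⟨1, einW, x, hx, one_mul x⟩
  have Sclosed : IsClosed (S : Set G) :=
    (⟨S, Sopen⟩ : OpenSubgroup G).isClosed
  exact ⟨S, ⟨Wc.of_isClosed_subset Sclosed hsub, Sopen⟩, hsub⟩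

end Aux

section Main

variable [Group G] [TopologicalSpace G]

/-- Left translation on the meet groupoid. -/
noncomputable def transFun (g : G) (A : MeetGroupoid G) : MeetGroupoid G :=
  ⟨{g} * A.val, by
    rcases A.2 with h | ⟨V, hV, k, hk⟩
    · left; simp [h]
    · right
      exact ⟨V, hV, g * k, by
        rw [hk, ← mul_assoc, Set.singleton_mul_singleton]⟩⟩

lemma transFun_comp (g h : G) (A : MeetGroupoid G) :
    transFun g (transFun h A) = transFun (g * h) A := by
  apply Subtype.ext
  show {g} * ({h} * A.val) = {g * h} * A.val
  rw [← mul_assoc, Set.singleton_mul_singleton]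

lemma transFun_one (A : MeetGroupoid G) : transFun 1 A = A := by
  apply Subtype.ext
  show ({1} : Set G) * A.val = A.val
  rw [Set.singleton_one, one_mul]

/-- Left translation as a permutation of the meet groupoid. -/
noncomputable def transPerm (g : G) : Equiv.Perm (MeetGroupoid G) where
  toFun := transFun g
  invFun := transFun g⁻¹
  left_inv A := by rw [transFun_comp, inv_mul_cancel, transFun_one]
  right_inv A := by rw [transFun_comp, mul_inv_cancel, transFun_one]

/-- `Φ` as a group homomorphism. -/
noncomputable def transHom : G →* Equiv.Perm (MeetGroupoid G) where
  toFun := transPerm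
  map_one' := Equiv.ext fun A => transFun_one A
  map_mul' g h := Equiv.ext fun A => (transFun_comp g h A).symm

end Main

/-- For a t.d.l.c. group `G`, left translation `Φ(g)(A) = gA` gives a well-defined
permutation of `W(G)` preserving intersections and satisfying
`Φ(g)(A)·B = Φ(g)(A·B)` whenever `A·B` is defined; moreover `Φ : G → Sym(W(G))`
is an injective group homomorphism. -/
theorem stmt_8 [Group G] [TopologicalSpace G] [IsTopologicalGroup G]
    [LocallyCompactSpace G] [TotallyDisconnectedSpace G] [T2Space G] :
    ∃ Φ : G →* Equiv.Perm (MeetGroupoid G),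
      Function.Injective Φ ∧
      (∀ (g : G) (A : MeetGroupoid G), (Φ g A).val = {g} * A.val) ∧
      (∀ (g : G) (A B : MeetGroupoid G),
        (Φ g A).val ∩ (Φ g B).val = {g} * (A.val ∩ B.val)) ∧
      (∀ (g : G) (A B : MeetGroupoid G), ProdDef A.val B.val →
        (Φ g A).val * B.val = {g} * (A.val * B.val)) := by
  refine ⟨transHom, ?_, fun g A => rfl, ?_, ?_⟩
  · -- injectivity
    rw [injective_iff_map_eq_one]
    intro g hg
    by_contra hne
    -- find a compact open subgroup not containing g
    obtain ⟨K, hKc, hKn⟩ := exists_compact_mem_nhds (1 : G)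
    have hU : IsOpen (interior K ∩ {g}ᶜ) :=
      isOpen_interior.inter (isOpen_compl_singleton)
    have h1 : (1 : G) ∈ interior K ∩ {g}ᶜ :=
      ⟨mem_interior_iff_mem_nhds.2 hKn, fun h => hne (by simpa using h.symm)⟩
    obtain ⟨W, hWclopen, hW1, hWsub⟩ :=
      (loc_compact_Haus_tot_disc_of_zero_dim (H := G)).mem_nhds_iff.1 (hU.mem_nhds h1)
    have hWc : IsCompact W := hKc.of_isClosed_subset hWclopen.1
      (fun x hx => interior_subset (hWsub hx).1)
    obtain ⟨S, hS, hSW⟩ := aux_vanDantzig hWc hWclopen.2 hW1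
    have hgS : g ∉ (S : Set G) := fun h => (hWsub (hSW h)).2 rfl
    -- S is an element of the meet groupoid fixed by Φ g
    have hScoc : IsCOC (S : Set G) := ⟨S, hS, 1, by rw [Set.singleton_one, one_mul]⟩
    have := congrArg (fun e : Equiv.Perm (MeetGroupoid G) =>
      (e ⟨(S : Set G), Or.inr hScoc⟩).val) hg
    have heq : {g} * (S : Set G) = (S : Set G) := this
    apply hgS
    rw [← heq]
    exact ⟨g, rfl, 1, S.one_mem, mul_one g⟩
  · -- intersections
    intro g A B
    show ({g} * A.val) ∩ ({g} * B.val) = {g} * (A.val ∩ B.val)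
    simp only [Set.singleton_mul]
    exact (Set.image_inter (mul_right_injective g)).symm
  · -- products
    intro g A B _
    show ({g} * A.val) * B.val = {g} * (A.val * B.val)
    rw [mul_assoc]
end

section
/- Let G be a t.d.l.c. group and let p be a permutation of the set W(G) of compact open cosets of G that preserves intersections and satisfies p(A)·B = p(A·B) whenever A·B is defined. Then there exists g ∈ G such that p(A) = gA for all A ∈ W(G). -/
open Pointwise Topology Filter

variable {G : Type*}

section Aux

variable [Group G] [TopologicalSpace G] [IsTopologicalGroup G]

private lemma singleton_mul_left_cancel {x : G} {s t : Set G}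
    (h : ({x} : Set G) * s = {x} * t) : s = t := by
  have h2 := congrArg (fun u : Set G => ({x⁻¹} : Set G) * u) h
  simpa only [← mul_assoc, Set.singleton_mul_singleton, inv_mul_cancel, Set.singleton_one,
    one_mul] using h2

private lemma singleton_mul_coe {v : G} {V : Subgroup G} (hv : v ∈ V) :
    ({v} : Set G) * (V : Set G) = V := by
  rw [Set.singleton_mul]
  ext y
  constructor
  · rintro ⟨w, hw, rfl⟩
    exact V.mul_mem hv hw
  · intro hy
    exact ⟨v⁻¹ * y, V.mul_mem (V.inv_mem hv) hy, by group⟩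

private lemma coe_mul_singleton {v : G} {V : Subgroup G} (hv : v ∈ V) :
    (V : Set G) * ({v} : Set G) = V := by
  rw [Set.mul_singleton]
  ext y
  constructor
  · rintro ⟨w, hw, rfl⟩
    exact V.mul_mem hw hv
  · intro hy
    exact ⟨y * v⁻¹, V.mul_mem hy (V.inv_mem hv), by group⟩

/-- Conjugation of a compact open subgroup. -/
private lemma conj_exists (x : G) {V : Subgroup G} (hV : IsCO V) :
    ∃ V' : Subgroup G, IsCO V' ∧ (V' : Set G) = {x} * (V : Set G) * {x⁻¹} := by
  have hcoe : ((V.map (MulAut.conj x).toMonoidHom : Subgroup G) : Set G)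
      = {x} * (V : Set G) * {x⁻¹} := by
    ext y
    simp only [Subgroup.coe_map, Set.mem_image, Set.mul_singleton, Set.singleton_mul,
      MulEquiv.coe_toMonoidHom, MulAut.conj_apply, SetLike.mem_coe]
    constructor
    · rintro ⟨v, hv, rfl⟩
      exact ⟨x * v, ⟨v, hv, rfl⟩, rfl⟩
    · rintro ⟨_, ⟨v, hv, rfl⟩, rfl⟩
      exact ⟨v, hv, rfl⟩
  refine ⟨_, ⟨?_, ?_⟩, hcoe⟩
  · rw [hcoe, Set.mul_singleton, Set.singleton_mul]
    exact (hV.1.image (continuous_mul_left x)).image (continuous_mul_right x⁻¹)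
  · rw [hcoe, Set.mul_singleton, Set.singleton_mul]
    have h1 : IsOpen ((fun b => x * b) '' (V : Set G)) :=
      (Homeomorph.mulLeft x).isOpen_image.mpr hV.2
    exact (Homeomorph.mulRight x⁻¹).isOpen_image.mpr h1

private lemma conj_right (t : G) {V : Subgroup G} (hV : IsCO V) :
    ∃ V' : Subgroup G, IsCO V' ∧ (V : Set G) * {t} = {t} * (V' : Set G) := by
  obtain ⟨V', h1, h2⟩ := conj_exists t⁻¹ hV
  refine ⟨V', h1, ?_⟩
  rw [h2, inv_inv, ← mul_assoc, ← mul_assoc, Set.singleton_mul_singleton, mul_inv_cancel,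
    Set.singleton_one, one_mul]

private lemma conj_left (x : G) {V : Subgroup G} (hV : IsCO V) :
    ∃ V' : Subgroup G, IsCO V' ∧ ({x} : Set G) * (V : Set G) = (V' : Set G) * {x} := by
  obtain ⟨V', h1, h2⟩ := conj_exists x hV
  refine ⟨V', h1, ?_⟩
  rw [h2, mul_assoc, Set.singleton_mul_singleton, inv_mul_cancel, Set.singleton_one, mul_one]

end Aux

section VanDantzig

variable [Group G] [TopologicalSpace G] [IsTopologicalGroup G]
  [LocallyCompactSpace G] [TotallyDisconnectedSpace G] [T2Space G]

/-- van Dantzig: a t.d.l.c. group has a compact open subgroup. -/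
private lemma exists_isCO : ∃ V : Subgroup G, IsCO V := by
  obtain ⟨K, hKc, hK1⟩ := exists_compact_mem_nhds (1 : G)
  obtain ⟨W, hWclopen, h1W, hWK⟩ :=
    loc_compact_Haus_tot_disc_of_zero_dim.mem_nhds_iff.mp hK1
  have hWclopen : IsClopen W := hWclopen
  have hWc : IsCompact W := hKc.of_isClosed_subset hWclopen.1 hWK
  -- There is `T ∈ 𝓝 1` with `W * T ⊆ W`.
  have hT : ∃ T ∈ 𝓝 (1 : G), W * T ⊆ W := by
    apply hWc.induction_on (p := fun S ↦ ∃ T ∈ 𝓝 (1 : G), S * T ⊆ W)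
      ⟨Set.univ, Filter.univ_mem, by simp⟩
      (fun _ _ huv ⟨T, hT, mem⟩ ↦ ⟨T, hT, (Set.mul_subset_mul_right huv).trans mem⟩)
      (fun U V ⟨T₁, hT₁, mem1⟩ ⟨T₂, hT₂, mem2⟩ ↦ ⟨T₁ ∩ T₂, Filter.inter_mem hT₁ hT₂, by
        rw [Set.union_mul]
        exact Set.union_subset ((Set.mul_subset_mul_left Set.inter_subset_left).trans mem1)
          ((Set.mul_subset_mul_left Set.inter_subset_right).trans mem2)⟩)
    intro x memW
    have hx1 : (x, 1) ∈ (fun p : G × G ↦ p.1 * p.2) ⁻¹' W := by simp [memW]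
    rcases isOpen_prod_iff.mp (continuous_mul.isOpen_preimage W hWclopen.2) x 1 hx1 with
      ⟨U, V, Uopen, Vopen, xmemU, onememV, prodsub⟩
    have h6 : U * V ⊆ W :=
      Set.mul_subset_iff.mpr (fun _ hx _ hy ↦ prodsub (Set.mk_mem_prod hx hy))
    refine ⟨U ∩ W, ?_, V, Vopen.mem_nhds onememV,
      fun _ a ↦ h6 ((Set.mul_subset_mul_right Set.inter_subset_left) a)⟩
    exact mem_nhdsWithin.mpr ⟨U, Uopen, xmemU, fun y hy => hy⟩
  obtain ⟨S, hS, hmulS⟩ := hT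
  obtain ⟨U, hUS, hUo, h1U⟩ := mem_nhds_iff.mp hS
  set V : Set G := U ∩ U⁻¹ with hVdef
  have hVo : IsOpen V := hUo.inter hUo.inv
  have h1V : (1 : G) ∈ V := ⟨h1U, by simpa using h1U⟩
  have hVinv : V⁻¹ = V := by
    rw [hVdef, Set.inter_inv, inv_inv, Set.inter_comm]
  have hVW : W * V ⊆ W := fun a ha =>
    hmulS (Set.mul_subset_mul_left (Set.inter_subset_left.trans hUS) ha)
  let H : Subgroup G :=
    { carrier := ⋃ n, V ^ (n + 1)
      mul_mem' := fun ha hb ↦ by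
        rcases Set.mem_iUnion.mp ha with ⟨k, hk⟩
        rcases Set.mem_iUnion.mp hb with ⟨l, hl⟩
        apply Set.mem_iUnion.mpr
        exact ⟨k + 1 + l, by rw [add_assoc, pow_add]; exact Set.mul_mem_mul hk hl⟩
      one_mem' := by
        apply Set.mem_iUnion.mpr
        exact ⟨0, by simpa using h1V⟩
      inv_mem' := fun ha ↦ by
        rcases Set.mem_iUnion.mp ha with ⟨k, hk⟩
        apply Set.mem_iUnion.mpr
        refine ⟨k, ?_⟩
        rw [← hVinv]
        simpa only [inv_pow, Set.mem_inv, inv_inv] using hk }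
    
  have hHo : IsOpen (H : Set G) := by
    refine isOpen_iUnion (fun n ↦ ?_)
    rw [pow_succ]
    exact hVo.mul_left
  have mulVpow : ∀ n : ℕ, W * V ^ (n + 1) ⊆ W := by
    intro n
    induction' n with n ih
    · simpa using hVW
    · rw [pow_succ, ← mul_assoc]
      exact (Set.mul_subset_mul_right ih).trans hVW
  have hsub : ∀ n : ℕ, V ^ (n + 1) ⊆ W * V ^ (n + 1) := by
    intro n x xin
    rw [Set.mem_mul]
    exact ⟨1, h1W, x, xin, one_mul x⟩
  have hHW : (H : Set G) ⊆ W := Set.iUnion_subset fun i _ a ↦ mulVpow i (hsub i a)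
  exact ⟨H, ⟨hWc.of_isClosed_subset (H.isClosed_of_isOpen hHo) hHW, hHo⟩⟩

end VanDantzig

/-- If a permutation `p` of `W(G)` preserves intersections and satisfies
`p(A)·B = p(A·B)` whenever `A·B` is defined, then `p` is left translation by some
`g ∈ G`, i.e. `p(A) = gA` for all `A ∈ W(G)`. -/
theorem stmt_9 [Group G] [TopologicalSpace G] [IsTopologicalGroup G]
    [LocallyCompactSpace G] [TotallyDisconnectedSpace G] [T2Space G]
    [SecondCountableTopology G]
    (p : Equiv.Perm (MeetGroupoid G))
    (hmeet : ∀ A B C : MeetGroupoid G, C.val = A.val ∩ B.val →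
      (p C).val = (p A).val ∩ (p B).val)
    (hprod : ∀ A B C : MeetGroupoid G, ProdDef A.val B.val → C.val = A.val * B.val →
      (p A).val * B.val = (p C).val) :
    ∃ g : G, ∀ A : MeetGroupoid G, (p A).val = {g} * A.val := by
  classical
  set e : MeetGroupoid G := ⟨∅, Or.inl rfl⟩ with he
  -- monotonicity
  have mono : ∀ A B : MeetGroupoid G, A.val ⊆ B.val → (p A).val ⊆ (p B).val := by
    intro A B h
    have h2 := hmeet A B A (Set.inter_eq_left.mpr h).symm
    intro y hy
    rw [h2] at hy
    exact hy.2
  -- the image of ∅ is ∅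
  have hpe : (p e).val = ∅ := by
    have h1 : (p e).val ⊆ (p (p.symm e)).val := mono _ _ (by simp [he])
    rw [Equiv.apply_symm_apply] at h1
    exact Set.subset_empty_iff.mp h1
  -- the image of a nonempty coset is nonempty
  have hne : ∀ A : MeetGroupoid G, A.val.Nonempty → (p A).val.Nonempty := by
    intro A hA
    rcases Set.eq_empty_or_nonempty (p A).val with h | h
    · exfalso
      have h1 : p A = p e := Subtype.ext (h.trans hpe.symm)
      have h2 := p.injective h1
      rw [h2] at hA
      simpa [he] using hA
    · exact h
  -- compact open subgroups as elements of the meet groupoid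
  let ι := {V : Subgroup G // IsCO V}
  let AV : ι → MeetGroupoid G := fun V =>
    ⟨(V.1 : Set G), Or.inr ⟨V.1, V.2, 1, by simp⟩⟩
  have hAV : ∀ V : ι, (AV V).val = (V.1 : Set G) := fun _ => rfl
  -- the key step: `p` maps a compact open subgroup to one of its left cosets
  have key : ∀ V : ι, ∃ h : G, (p (AV V)).val = {h} * (V.1 : Set G) := by
    rintro ⟨Vg, hVco⟩
    set A₀ : MeetGroupoid G := AV ⟨Vg, hVco⟩ with hA₀
    have hA₀v : A₀.val = (Vg : Set G) := rfl
    have hself : (p A₀).val * (Vg : Set G) = (p A₀).val := by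
      have h1 := hprod A₀ A₀ A₀ ⟨Vg, hVco, ⟨1, by simp; rfl⟩, ⟨1, by simp; rfl⟩⟩
        (by rw [hA₀v]; exact (coe_mul_coe Vg).symm)
      rw [hA₀v] at h1
      exact h1
    have hnon : (p A₀).val.Nonempty := hne _ ⟨1, Vg.one_mem⟩
    obtain hP | ⟨Wg, hWco, h, hPW⟩ := (p A₀).2
    · exact absurd hP hnon.ne_empty
    refine ⟨h, ?_⟩
    have hWV : (Wg : Set G) * (Vg : Set G) = (Wg : Set G) := by
      apply singleton_mul_left_cancel (x := h)
      rw [← mul_assoc, ← hPW, hself, hPW]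
    have hVle : (Vg : Set G) ⊆ (Wg : Set G) := by
      intro v hv
      have h1 : (1 : G) * v ∈ (Wg : Set G) * (Vg : Set G) :=
        Set.mul_mem_mul Wg.one_mem hv
      rw [hWV] at h1
      simpa using h1
    have hWle : (Wg : Set G) ⊆ (Vg : Set G) := by
      intro t ht
      obtain ⟨V₂, hV₂co, hV₂⟩ := conj_right t hVco
      set Bt : MeetGroupoid G := ⟨(Vg : Set G) * {t}, Or.inr ⟨V₂, hV₂co, t, hV₂⟩⟩ with hBtdef
      have hBtv : Bt.val = (Vg : Set G) * {t} := rfl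
      have h1 := hprod A₀ Bt Bt ⟨Vg, hVco, ⟨1, by simp; rfl⟩, ⟨t, rfl⟩⟩
        (by rw [hBtv, hA₀v, ← mul_assoc, coe_mul_coe])
      have h2 : (p Bt).val = (p A₀).val := by
        rw [← h1, hBtv, ← mul_assoc, hself, hPW, mul_assoc,
          coe_mul_singleton ht, ← hPW]
      have h3 : Bt = A₀ := p.injective (Subtype.ext h2)
      have h4 : (Vg : Set G) * {t} = (Vg : Set G) := by
        rw [← hBtv, h3, hA₀v]
      have h5 : (1 : G) * t ∈ (Vg : Set G) * ({t} : Set G) :=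
        Set.mul_mem_mul Vg.one_mem rfl
      rw [h4] at h5
      simpa using h5
    rw [hPW, Set.Subset.antisymm hWle hVle]
  -- choose the translating elements
  choose hh hhspec using key
  -- the family `p(V)` over compact open subgroups is a directed family
  obtain ⟨V₀, hV₀⟩ := exists_isCO (G := G)
  have hι : Nonempty ι := ⟨⟨V₀, hV₀⟩⟩
  have hdir : Directed (· ⊇ ·) (fun V : ι => (p (AV V)).val) := by
    intro V₁ V₂
    have hco : IsCO (V₁.1 ⊓ V₂.1) := by
      constructor
      · rw [Subgroup.coe_inf]
        exact V₁.2.1.inter_right (V₂.1.isClosed_of_isOpen V₂.2.2)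
      · rw [Subgroup.coe_inf]
        exact V₁.2.2.inter V₂.2.2
    refine ⟨⟨V₁.1 ⊓ V₂.1, hco⟩, ?_, ?_⟩ <;>
    · have h1 := hmeet (AV V₁) (AV V₂) (AV ⟨V₁.1 ⊓ V₂.1, hco⟩) (by
        rw [hAV, hAV, hAV]
        exact Subgroup.coe_inf V₁.1 V₂.1)
      intro y hy
      have hy2 : y ∈ (p (AV V₁)).val ∩ (p (AV V₂)).val := by
        rw [← h1]; exact hy
      first
        | exact hy2.1
        | exact hy2.2
  have hnonempty : ∀ V : ι, ((p (AV V)).val).Nonempty := fun V => hne _ ⟨1, V.1.one_mem⟩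
  have hcomp : ∀ V : ι, IsCompact (p (AV V)).val := by
    intro V
    rw [hhspec V, Set.singleton_mul]
    exact V.2.1.image (continuous_mul_left _)
  obtain ⟨g, hg⟩ := IsCompact.nonempty_iInter_of_directed_nonempty_isCompact_isClosed _
    hdir hnonempty hcomp (fun V => (hcomp V).isClosed)
  have hgV : ∀ V : ι, (p (AV V)).val = {g} * (V.1 : Set G) := by
    intro V
    have hgmem : g ∈ ({hh V} : Set G) * (V.1 : Set G) := by
      rw [← hhspec V]
      exact Set.mem_iInter.mp hg V
    obtain ⟨a, ha, v, hv, hgav⟩ := Set.mem_mul.mp hgmem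
    rw [Set.mem_singleton_iff] at ha
    subst ha
    rw [hhspec V, ← hgav, ← Set.singleton_mul_singleton, mul_assoc, singleton_mul_coe hv]
  -- conclusion
  refine ⟨g, ?_⟩
  intro A
  obtain hA | ⟨U, hU, x, hAx⟩ := A.2
  · have h1 : A = e := Subtype.ext hA
    rw [h1, hpe]
    show (∅ : Set G) = {g} * e.val
    rw [show e.val = (∅ : Set G) from rfl, Set.mul_empty]
  · obtain ⟨V', hV'co, hV'⟩ := conj_left x hU
    have hA' : A.val = (V' : Set G) * {x} := by rw [hAx, hV']
    have hp := hprod (AV ⟨V', hV'co⟩) A A ⟨V', hV'co, ⟨1, by simp; rfl⟩, ⟨x, hA'⟩⟩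
      (by rw [hAV]; rw [hA', ← mul_assoc, coe_mul_coe])
    rw [← hp, hgV ⟨V', hV'co⟩, mul_assoc]
    congr 1
    rw [hA', ← mul_assoc, coe_mul_coe]
end

section
/- Let G be a t.d.l.c. group, U a compact open subgroup, L a left coset of U, and F a right coset of a compact open subgroup V. Then the set {gF : g ∈ G, gU = L} is finite; in fact it equals {DF : D a left coset of V containing some left coset of U∩V contained in L}, and its cardinality is at most |U : U ∩ V|. -/
open Pointwise

/-- Let `U, V` be compact open subgroups of a t.d.l.c. group `G`, `L = lU` a left coset
of `U` and `F = Vf₀` a right coset of `V`. Then the set `{gF : g ∈ G, gU = L}` is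
finite; it equals the set of products `DF` where `D` is a left coset of `V` containing
some left coset of `U ∩ V` contained in `L`; and its cardinality is at most
`|U : U ∩ V|`. -/
theorem stmt_10 {G : Type*} [Group G] [TopologicalSpace G] [IsTopologicalGroup G]
    [LocallyCompactSpace G] [TotallyDisconnectedSpace G] [T2Space G]
    (U V : Subgroup G) (hUc : IsCompact (U : Set G)) (hUo : IsOpen (U : Set G))
    (hVc : IsCompact (V : Set G)) (hVo : IsOpen (V : Set G))
    (l f₀ : G) (L F : Set G) (hL : L = {l} * (U : Set G)) (hF : F = (V : Set G) * {f₀}) :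
    (({A : Set G | ∃ g : G, {g} * (U : Set G) = L ∧ A = {g} * F}).Finite) ∧
    ({A : Set G | ∃ g : G, {g} * (U : Set G) = L ∧ A = {g} * F} =
      {A : Set G | ∃ d : G,
        (∃ c : G, {c} * ((U ⊓ V : Subgroup G) : Set G) ⊆ L ∧
          {c} * ((U ⊓ V : Subgroup G) : Set G) ⊆ {d} * (V : Set G)) ∧
        A = ({d} * (V : Set G)) * F}) ∧
    ({A : Set G | ∃ g : G, {g} * (U : Set G) = L ∧ A = {g} * F}).ncard ≤
      (U ⊓ V).relIndex U := by
  -- basic singleton-mul facts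
  have hsm : ∀ (a : G) (t : Set G), {a} * t = a • t := fun a t => by
    rw [Set.singleton_mul]; rfl
  -- multiplying by an element of V on the right inside the singleton doesn't change gF
  have hVF : (V : Set G) * F = F := by
    rw [hF, ← mul_assoc, coe_mul_coe]
  have hFf : ∀ (g w : G), w ∈ V → ({g * w} : Set G) * F = {g} * F := by
    intro g w hw
    have : ({g * w} : Set G) = {g} * {w} := (Set.singleton_mul_singleton).symm
    rw [this, mul_assoc, hF, ← mul_assoc ({w} : Set G),
      Subgroup.singleton_mul_subgroup hw]
  -- coset equality criterion
  have hcoset : ∀ g : G, ({g} * (U : Set G) = L ↔ l⁻¹ * g ∈ U) := by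
    intro g
    rw [hL, hsm, hsm, eq_comm, leftCoset_eq_iff]
  have hcosetV : ∀ d c : G, d⁻¹ * c ∈ V → ({c} : Set G) * V = {d} * V := by
    intro d c h
    rw [hsm, hsm]
    exact ((leftCoset_eq_iff V).mpr h).symm
  -- set up the finite quotient U ⧸ (U ⊓ V).subgroupOf U
  set S := {A : Set G | ∃ g : G, {g} * (U : Set G) = L ∧ A = {g} * F} with hS
  set K : Subgroup U := (U ⊓ V).subgroupOf U with hK
  have hKopen : IsOpen (K : Set U) := by
    have hset : (K : Set U) = (Subtype.val : U → G) ⁻¹' (V : Set G) := by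
      ext x
      simp [hK, Subgroup.mem_subgroupOf, x.2]
    rw [hset]
    exact hVo.preimage continuous_subtype_val
  have hcs : CompactSpace U := isCompact_iff_compactSpace.mp hUc
  have hfin : Finite (U ⧸ K) := Subgroup.quotient_finite_of_isOpen K hKopen
  -- the map from the quotient
  have hlift : ∀ a b : U, QuotientGroup.leftRel K a b →
      ({l * (a : G)} : Set G) * F = {l * (b : G)} * F := by
    intro a b hab
    rw [QuotientGroup.leftRel_apply] at hab
    have hmem : ((a : G))⁻¹ * (b : G) ∈ V := by
      have := (Subgroup.mem_subgroupOf.mp hab)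
      exact this.2
    have hb : l * (b : G) = (l * (a : G)) * (((a : G))⁻¹ * (b : G)) := by
      group
    rw [hb, hFf _ _ hmem]
  let φ : U ⧸ K → Set G := fun q => Quotient.liftOn' q (fun u : U => {l * (u : G)} * F) hlift
  -- S is contained in the range of φ
  have hsub : S ⊆ Set.range φ := by
    rintro A ⟨g, hg, rfl⟩
    have hu : l⁻¹ * g ∈ U := (hcoset g).mp hg
    refine ⟨Quotient.mk'' ⟨l⁻¹ * g, hu⟩, ?_⟩
    show ({l * (l⁻¹ * g)} : Set G) * F = {g} * F
    rw [mul_inv_cancel_left]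
  have hfinS : S.Finite := (Set.finite_range φ).subset hsub
  refine ⟨hfinS, ?_, ?_⟩
  · -- the set equality
    ext A
    constructor
    · rintro ⟨g, hg, rfl⟩
      refine ⟨g, ⟨g, ?_, ?_⟩, ?_⟩
      · rw [← hg]
        exact Set.mul_subset_mul_left (by rw [Subgroup.coe_inf]; exact Set.inter_subset_left)
      · exact Set.mul_subset_mul_left (by rw [Subgroup.coe_inf]; exact Set.inter_subset_right)
      · rw [mul_assoc, hVF]
    · rintro ⟨d, ⟨c, hcL, hcd⟩, rfl⟩
      have hc1 : c ∈ ({c} : Set G) * ((U ⊓ V : Subgroup G) : Set G) := by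
        simpa using Set.mul_mem_mul (Set.mem_singleton c) ((U ⊓ V).one_mem)
      have hcL' : c ∈ L := hcL hc1
      have hcd' : c ∈ ({d} : Set G) * (V : Set G) := hcd hc1
      have hdc : d⁻¹ * c ∈ V := by
        obtain ⟨x, hx, v, hv, hcv⟩ := hcd'
        rw [Set.mem_singleton_iff] at hx
        subst hx
        change x * v = c at hcv
        have hxc : x⁻¹ * c = v := by rw [← hcv]; group
        rwa [hxc]
      have hlc : l⁻¹ * c ∈ U := by
        rw [hL] at hcL'
        obtain ⟨x, hx, u, hu, hcu⟩ := hcL'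
        rw [Set.mem_singleton_iff] at hx
        subst hx
        change x * u = c at hcu
        have hxc : x⁻¹ * c = u := by rw [← hcu]; group
        rwa [hxc]
      refine ⟨c, (hcoset c).mpr hlc, ?_⟩
      rw [← hcosetV d c hdc, mul_assoc, hVF]
  · -- the cardinality bound
    have h1 : S.ncard ≤ (Set.range φ).ncard :=
      Set.ncard_le_ncard hsub (Set.finite_range φ)
    have h2 : (Set.range φ).ncard ≤ Nat.card (U ⧸ K) := by
      rw [← Set.image_univ, ← Set.ncard_univ (U ⧸ K)]
      exact Set.ncard_image_le Set.finite_univ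
    have h3 : (U ⊓ V).relIndex U = Nat.card (U ⧸ K) := rfl
    rw [h3]
    exact h1.trans h2
end

section
/- In the semidirect product G = ℤ ⋉ ℚ_p, where the generator t of ℤ acts on ℚ_p by α ↦ p·α, every compact open subgroup of G is contained in {0} × ℚ_p; consequently the compact open subgroups of G are exactly the groups {0} × p^r ℤ_p for r ∈ ℤ. -/
section Aux

variable (p : ℕ) [Fact p.Prime]

lemma aux_one_lt_p : (1 : ℝ) < (p : ℝ) := by
  exact_mod_cast (Fact.out : p.Prime).one_lt

/-- Every compact open additive subgroup of `ℚ_p` is a norm ball `{‖x‖ ≤ p^m}`. -/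
lemma aux_addSubgroup (K : AddSubgroup ℚ_[p]) (hKc : IsCompact (K : Set ℚ_[p]))
    (hKo : IsOpen (K : Set ℚ_[p])) :
    ∃ m : ℤ, (K : Set ℚ_[p]) = {x : ℚ_[p] | ‖x‖ ≤ (p : ℝ) ^ m} := by
  have hp1 : (1 : ℝ) < (p : ℝ) := aux_one_lt_p p
  have hp0 : (0 : ℝ) < (p : ℝ) := lt_trans one_pos hp1
  -- K contains a nonzero element
  obtain ⟨ε, hε, hball⟩ := Metric.isOpen_iff.mp hKo 0 K.zero_mem
  obtain ⟨n, hn⟩ := exists_pow_lt_of_lt_one hε (by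
    rw [inv_lt_one_iff₀]; right; exact hp1 : (p : ℝ)⁻¹ < 1)
  have hxK : ((p : ℚ_[p]) ^ (n : ℤ)) ∈ K := by
    apply hball
    rw [Metric.mem_ball, dist_zero_right, Padic.norm_p_zpow]
    calc (p : ℝ) ^ (-(n : ℤ)) = ((p : ℝ)⁻¹) ^ n := by
          rw [zpow_neg, zpow_natCast, ← inv_pow]
      _ < ε := hn
  have hxne : ((p : ℚ_[p]) ^ (n : ℤ)) ≠ 0 :=
    zpow_ne_zero _ (Nat.cast_ne_zero.mpr (Fact.out : p.Prime).ne_zero)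
  -- norms on K are bounded
  obtain ⟨C, hC⟩ := hKc.isBounded.subset_closedBall 0
  have hCnorm : ∀ x ∈ K, ‖x‖ ≤ C := fun x hx => by
    simpa [dist_zero_right] using hC hx
  -- the set of exponents
  set P : ℤ → Prop := fun m => ∃ x ∈ K, x ≠ 0 ∧ ‖x‖ = (p : ℝ) ^ m with hP
  obtain ⟨b, hb⟩ := pow_unbounded_of_one_lt C hp1
  have hbdd : ∀ z : ℤ, P z → z ≤ b := by
    rintro z ⟨x, hxK', hxne', hxnorm⟩
    by_contra h
    push_neg at h
    have h0 : (p : ℝ) ^ (b : ℤ) < (p : ℝ) ^ z :=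
      zpow_lt_zpow_right₀ hp1 (by exact_mod_cast h)
    have h1 : (p : ℝ) ^ z ≤ C := hxnorm ▸ hCnorm x hxK'
    have h2 : (p : ℝ) ^ (b : ℤ) = (p : ℝ) ^ b := zpow_natCast _ _
    linarith [hb]
  have hinh : ∃ z, P z := ⟨-(n : ℤ), ⟨_, hxK, hxne, by
    rw [Padic.norm_p_zpow]⟩⟩
  obtain ⟨m, ⟨x0, hx0K, hx0ne, hx0norm⟩, hmax⟩ := Int.exists_greatest_of_bdd ⟨b, hbdd⟩ hinh
  refine ⟨m, Set.Subset.antisymm ?_ ?_⟩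
  · -- K ⊆ ball
    intro x hx
    rcases eq_or_ne x 0 with rfl | hxne'
    · simp [le_of_lt (zpow_pos hp0 m)]
    · have hx2 := Padic.norm_eq_zpow_neg_valuation hxne'
      have hPv : P (-x.valuation) := ⟨x, hx, hxne', hx2⟩
      have hle := hmax _ hPv
      simp only [Set.mem_setOf_eq, hx2]
      exact zpow_le_zpow_right₀ (le_of_lt hp1) hle
  · -- ball ⊆ K
    intro y hy
    simp only [Set.mem_setOf_eq] at hy
    have hx0pos : (0 : ℝ) < ‖x0‖ := norm_pos_iff.mpr hx0ne
    have hKclosed : IsClosed (K : Set ℚ_[p]) := hKc.isClosed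
    rw [← hKclosed.closure_eq, Metric.mem_closure_iff]
    intro δ hδ
    -- z = y / x0 is a p-adic integer
    have hz : ‖y / x0‖ ≤ 1 := by
      rw [norm_div, div_le_one hx0pos, hx0norm]
      exact hy
    obtain ⟨k, hk⟩ := PadicInt.denseRange_intCast.exists_dist_lt
      (⟨y / x0, hz⟩ : ℤ_[p]) (div_pos hδ hx0pos)
    refine ⟨k • x0, K.zsmul_mem hx0K k, ?_⟩
    have hdist : dist (⟨y / x0, hz⟩ : ℤ_[p]) ((k : ℤ_[p])) = ‖y / x0 - (k : ℚ_[p])‖ := by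
      refine (@dist_eq_norm ℤ_[p] _ ⟨y / x0, hz⟩ (k : ℤ_[p])).trans ?_; rw [PadicInt.norm_def]
      push_cast
      rfl
    have hd2 : dist y (k • x0) = ‖y / x0 - (k : ℚ_[p])‖ * ‖x0‖ := by
      rw [dist_eq_norm, ← norm_mul]
      congr 1
      field_simp [zsmul_eq_mul]
      ring
    rw [hd2]
    calc ‖y / x0 - (k : ℚ_[p])‖ * ‖x0‖ < (δ / ‖x0‖) * ‖x0‖ := by
          apply mul_lt_mul_of_pos_right _ hx0pos
          rw [← hdist]; exact hk
      _ = δ := div_mul_cancel₀ δ (ne_of_gt hx0pos)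

end Aux

/-- The semidirect product `ℤ ⋉ ℚ_p`, realized as the group structure on `ℤ × ℚ_p`
with multiplication `(z₁,α₁)(z₂,α₂) = (z₁+z₂, p^{z₂}α₁ + α₂)`. -/
noncomputable instance zSemiQp (p : ℕ) [Fact p.Prime] : Group (ℤ × ℚ_[p]) where
  mul a b := (a.1 + b.1, (p : ℚ_[p]) ^ b.1 * a.2 + b.2)
  one := (0, 0)
  npow n x := @npowRec _ ⟨(0, 0)⟩ ⟨fun a b => (a.1 + b.1, (p : ℚ_[p]) ^ b.1 * a.2 + b.2)⟩ n x
  npow_zero _ := rfl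
  npow_succ _ _ := rfl
  inv a := (-a.1, -((p : ℚ_[p]) ^ (-a.1) * a.2))
  div a b := (a.1 + -b.1, (p : ℚ_[p]) ^ (-b.1) * a.2 + -((p : ℚ_[p]) ^ (-b.1) * b.2))
  div_eq_mul_inv a b := rfl
  mul_assoc a b c := by
    have hp : (p : ℚ_[p]) ≠ 0 :=
      Nat.cast_ne_zero.mpr (Fact.out : p.Prime).ne_zero
    show Prod.mk _ _ = Prod.mk _ _
    rw [Prod.mk.injEq]
    refine ⟨add_assoc _ _ _, ?_⟩
    show (p : ℚ_[p]) ^ c.1 * ((p : ℚ_[p]) ^ b.1 * a.2 + b.2) + c.2 =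
      (p : ℚ_[p]) ^ (b.1 + c.1) * a.2 + ((p : ℚ_[p]) ^ c.1 * b.2 + c.2)
    rw [zpow_add₀ hp]
    ring
  one_mul a := by
    show Prod.mk (0 + a.1) ((p : ℚ_[p]) ^ a.1 * 0 + a.2) = a
    rw [mul_zero, zero_add, zero_add]
  mul_one a := by
    show Prod.mk (a.1 + 0) ((p : ℚ_[p]) ^ (0 : ℤ) * a.2 + 0) = a
    rw [zpow_zero, one_mul, add_zero, add_zero]
  inv_mul_cancel a := by
    have hp : (p : ℚ_[p]) ≠ 0 :=
      Nat.cast_ne_zero.mpr (Fact.out : p.Prime).ne_zero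
    show Prod.mk _ _ = Prod.mk _ _
    rw [Prod.mk.injEq]
    constructor
    · exact neg_add_cancel _
    · show (p : ℚ_[p]) ^ a.1 * -((p : ℚ_[p]) ^ (-a.1) * a.2) + a.2 = 0
      rw [mul_neg, ← mul_assoc, ← zpow_add₀ hp]
      simp

section Semidirect

variable (p : ℕ) [Fact p.Prime]

/-- First coordinate of a `ℕ`-power in the semidirect product. -/
lemma aux_pow_fst (x : ℤ × ℚ_[p]) (k : ℕ) :
    (@HPow.hPow _ ℕ _ (@instHPow _ _ (@NPow.toPow _ (@Monoid.toNPow _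
      (@DivInvMonoid.toMonoid _ inferInstance)))) x k).1 = (k : ℤ) * x.1 := by
  induction k with
  | zero =>
    show (0 : ℤ) = ((0 : ℕ) : ℤ) * x.1
    simp
  | succ n ih =>
    rw [@pow_succ _ (@DivInvMonoid.toMonoid _ inferInstance) x n]
    show (@HPow.hPow _ ℕ _ (@instHPow _ _ (@NPow.toPow _ (@Monoid.toNPow _
      (@DivInvMonoid.toMonoid _ inferInstance)))) x n).1 + x.1 = ((n + 1 : ℕ) : ℤ) * x.1
    rw [ih]
    push_cast
    ring

end Semidirect

/-- In `G = ℤ ⋉ ℚ_p` (with `t·α·t⁻¹ = pα`): every compact open subgroup of `G` is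
contained in `{0} × ℚ_p`, and consequently the compact open subgroups of `G` are
exactly the groups `{0} × p^r ℤ_p` for `r ∈ ℤ`. -/
theorem stmt_14 (p : ℕ) [Fact p.Prime] :
    (∀ H : Subgroup (ℤ × ℚ_[p]), IsCompact (H : Set (ℤ × ℚ_[p])) →
      IsOpen (H : Set (ℤ × ℚ_[p])) →
      ((H : Set (ℤ × ℚ_[p])) ⊆ {q : ℤ × ℚ_[p] | q.1 = 0} ∧
        ∃ r : ℤ, (H : Set (ℤ × ℚ_[p])) =
          ({0} : Set ℤ) ×ˢ {x : ℚ_[p] | ‖x‖ ≤ (p : ℝ) ^ (-r)})) ∧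
    (∀ r : ℤ, ∃ H : Subgroup (ℤ × ℚ_[p]),
      (H : Set (ℤ × ℚ_[p])) = ({0} : Set ℤ) ×ˢ {x : ℚ_[p] | ‖x‖ ≤ (p : ℝ) ^ (-r)} ∧
      IsCompact (H : Set (ℤ × ℚ_[p])) ∧ IsOpen (H : Set (ℤ × ℚ_[p]))) := by
  have hp1 : (1 : ℝ) < (p : ℝ) := aux_one_lt_p p
  have hp0 : (0 : ℝ) < (p : ℝ) := lt_trans one_pos hp1
  constructor
  · intro H hHc hHo
    -- Step 1: first coordinates vanish
    have hfst : ∀ x ∈ H, x.1 = 0 := by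
      have himg : IsCompact (Prod.fst '' (H : Set (ℤ × ℚ_[p]))) :=
        hHc.image continuous_fst
      obtain ⟨M, hM⟩ := himg.bddAbove
      have key : ∀ y : ℤ × ℚ_[p], y ∈ H → 0 < y.1 → False := by
        intro y hy hpos
        have hval := hM (Set.mem_image_of_mem Prod.fst (H.pow_mem hy (M.natAbs + 1)))
        rw [aux_pow_fst] at hval
        have h3 : (M : ℤ) ≤ M.natAbs := Int.le_natAbs
        have h4 : (1 : ℤ) ≤ y.1 := hpos
        push_cast at hval
        have h5 : |M| + 1 ≤ (|M| + 1) * y.1 :=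
          le_mul_of_one_le_right (by positivity) h4
        linarith [le_abs_self M]
      intro x hx
      rcases lt_trichotomy x.1 0 with h | h | h
      · exfalso
        refine key _ (H.inv_mem hx) ?_
        show (0 : ℤ) < -x.1
        omega
      · exact h
      · exact absurd h (by simpa using key x hx)
    refine ⟨hfst, ?_⟩
    -- Step 2: the second-coordinate subgroup
    set K : AddSubgroup ℚ_[p] :=
      { carrier := {α : ℚ_[p] | (((0 : ℤ), α) : ℤ × ℚ_[p]) ∈ H}
        zero_mem' := by
          show (((0 : ℤ), (0 : ℚ_[p])) : ℤ × ℚ_[p]) ∈ H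
          exact H.one_mem
        add_mem' := by
          intro a b ha hb
          have h := H.mul_mem ha hb
          show (((0 : ℤ), a + b) : ℤ × ℚ_[p]) ∈ H
          convert h using 1
          refine Prod.ext ?_ ?_
          · show (0 : ℤ) = 0 + 0
            rw [add_zero]
          · show a + b = (p : ℚ_[p]) ^ (0 : ℤ) * a + b
            rw [zpow_zero, one_mul]
        neg_mem' := by
          intro a ha
          have h := H.inv_mem ha
          show (((0 : ℤ), -a) : ℤ × ℚ_[p]) ∈ H
          convert h using 1
          refine Prod.ext ?_ ?_
          · show (0 : ℤ) = -0
            rw [neg_zero]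
          · show -a = -((p : ℚ_[p]) ^ (-(0 : ℤ)) * a)
            rw [neg_zero, zpow_zero, one_mul] } with hKdef
    have hHset : (H : Set (ℤ × ℚ_[p])) = ({0} : Set ℤ) ×ˢ (K : Set ℚ_[p]) := by
      ext a
      constructor
      · intro ha
        refine ⟨hfst a ha, ?_⟩
        show (((0 : ℤ), a.2) : ℤ × ℚ_[p]) ∈ H
        have he : a = ((0 : ℤ), a.2) := Prod.ext (hfst a ha) rfl
        rwa [← he]
      · rintro ⟨h1, h2⟩
        have he : a = ((0 : ℤ), a.2) := Prod.ext h1 rfl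
        rw [he]
        exact h2
    have hKc : IsCompact (K : Set ℚ_[p]) := by
      have he : (K : Set ℚ_[p]) = Prod.snd '' (H : Set (ℤ × ℚ_[p])) := by
        rw [hHset]
        ext α
        constructor
        · intro hα; exact ⟨((0 : ℤ), α), ⟨rfl, hα⟩, rfl⟩
        · rintro ⟨a, ⟨h1, h2⟩, rfl⟩; exact h2
      rw [he]
      exact hHc.image continuous_snd
    have hKo : IsOpen (K : Set ℚ_[p]) := by
      have he : (K : Set ℚ_[p]) = (fun α : ℚ_[p] => (((0 : ℤ), α) : ℤ × ℚ_[p])) ⁻¹' H := rfl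
      rw [he]
      exact hHo.preimage (Continuous.prodMk_right (0 : ℤ))
    obtain ⟨m, hm⟩ := aux_addSubgroup p K hKc hKo
    exact ⟨-m, by rw [hHset, hm, neg_neg]⟩
  · -- construction of the ball subgroups
    intro r
    have hball : ∀ α β : ℚ_[p], ‖α‖ ≤ (p : ℝ) ^ (-r) → ‖β‖ ≤ (p : ℝ) ^ (-r) →
        ‖α + β‖ ≤ (p : ℝ) ^ (-r) := fun α β hα hβ =>
      le_trans (Padic.nonarchimedean α β) (max_le hα hβ)
    letI m1 : Monoid (ℤ × ℚ_[p]) := @DivInvMonoid.toMonoid _ inferInstance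
    letI m2 : MulOneClass (ℤ × ℚ_[p]) := @Monoid.toMulOneClass _ m1
    letI m3 : Mul (ℤ × ℚ_[p]) := @MulOne.toMul _ (@MulOneClass.toMulOne _ m2)
    letI m4 : One (ℤ × ℚ_[p]) := @MulOne.toOne _ (@MulOneClass.toMulOne _ m2)
    refine ⟨{ toSubmonoid :=
                { carrier := ({0} : Set ℤ) ×ˢ {x : ℚ_[p] | ‖x‖ ≤ (p : ℝ) ^ (-r)},
                  one_mem' := by
                    refine ⟨rfl, ?_⟩
                    show ‖(0 : ℚ_[p])‖ ≤ (p : ℝ) ^ (-r)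
                    rw [norm_zero]
                    exact le_of_lt (zpow_pos hp0 _),
                  mul_mem' := by
                    rintro a b ⟨ha1, ha2⟩ ⟨hb1, hb2⟩
                    simp only [Set.mem_singleton_iff] at ha1 hb1
                    refine ⟨?_, ?_⟩
                    · show a.1 + b.1 ∈ ({0} : Set ℤ)
                      rw [ha1, hb1, add_zero]
                      rfl
                    · show ‖(p : ℚ_[p]) ^ b.1 * a.2 + b.2‖ ≤ (p : ℝ) ^ (-r)
                      rw [hb1, zpow_zero, one_mul]
                      exact hball _ _ ha2 hb2 },
              inv_mem' := by
                rintro a ⟨ha1, ha2⟩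
                simp only [Set.mem_singleton_iff] at ha1
                refine ⟨?_, ?_⟩
                · show -a.1 ∈ ({0} : Set ℤ)
                  rw [ha1, neg_zero]
                  rfl
                · show ‖-((p : ℚ_[p]) ^ (-a.1) * a.2)‖ ≤ (p : ℝ) ^ (-r)
                  rw [ha1, neg_zero, zpow_zero, one_mul, norm_neg]
                  exact ha2 }, rfl, ?_, ?_⟩
    · -- compact
      show IsCompact (({0} : Set ℤ) ×ˢ {x : ℚ_[p] | ‖x‖ ≤ (p : ℝ) ^ (-r)})
      apply IsCompact.prod isCompact_singleton
      have he : {x : ℚ_[p] | ‖x‖ ≤ (p : ℝ) ^ (-r)} = Metric.closedBall 0 ((p : ℝ) ^ (-r)) := by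
        ext x; simp [Metric.mem_closedBall, dist_zero_right]
      rw [he]
      exact isCompact_closedBall 0 _
    · -- open
      show IsOpen (({0} : Set ℤ) ×ˢ {x : ℚ_[p] | ‖x‖ ≤ (p : ℝ) ^ (-r)})
      apply IsOpen.prod (isOpen_discrete _)
      have he : {x : ℚ_[p] | ‖x‖ ≤ (p : ℝ) ^ (-r)} = Metric.ball 0 ((p : ℝ) ^ (-r + 1)) := by
        ext x
        rw [Metric.mem_ball, dist_zero_right, Set.mem_setOf_eq,
          Padic.norm_le_pow_iff_norm_lt_pow_add_one]
      rw [he]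
      exact Metric.isOpen_ball
end

section
/- Let G be a t.d.l.c. group with scale function s(g) = min over compact open subgroups V of |g⁻¹Vg : V ∩ g⁻¹Vg| and modular function Δ. Then for g ∈ G of the simplest displacement type—namely when V is minimizing for g—one has Δ(g) = s(g)/s(g⁻¹). -/
open MeasureTheory Pointwise
open scoped ENNReal

variable {G : Type*}

lemma coset_measure [Group G] [TopologicalSpace G] [IsTopologicalGroup G] [T2Space G]
    [MeasurableSpace G] [BorelSpace G]
    (μ : Measure G) [μ.IsMulLeftInvariant] (H K : Subgroup G)
    (hK : IsCompact (K : Set G)) (hH : IsOpen (H : Set G)) :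
    μ (K : Set G) = (Subgroup.relIndex H K : ℝ≥0∞) * μ ((H ⊓ K : Subgroup G) : Set G) := by
  haveI : CompactSpace K := isCompact_iff_compactSpace.mp hK
  have hopen : IsOpen ((H.subgroupOf K : Subgroup K) : Set K) := by
    have h : ((H.subgroupOf K : Subgroup K) : Set K) = (Subtype.val) ⁻¹' (H : Set G) := rfl
    rw [h]; exact hH.preimage continuous_subtype_val
  haveI fin : Finite (K ⧸ H.subgroupOf K) := Subgroup.quotient_finite_of_isOpen _ hopen
  set s : K ⧸ H.subgroupOf K → Set G :=
    fun q => ((Quotient.out q : K) : G) • ((H ⊓ K : Subgroup G) : Set G) with hs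
  have hmemq : ∀ (q : K ⧸ H.subgroupOf K) (x : G) (hx : x ∈ K), x ∈ s q →
      q = QuotientGroup.mk (⟨x, hx⟩ : K) := by
    intro q x hx hxq
    have h1 : ((Quotient.out q : K) : G)⁻¹ * x ∈ ((H ⊓ K : Subgroup G) : Set G) := by
      have := Set.mem_smul_set_iff_inv_smul_mem.mp hxq
      simpa [smul_eq_mul] using this
    rw [← QuotientGroup.out_eq' q]
    rw [QuotientGroup.eq]
    rw [Subgroup.mem_subgroupOf]
    simpa using h1.1
  have hcover : (K : Set G) = ⋃ q, s q := by
    ext x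
    constructor
    · intro hx
      set q₀ : K ⧸ H.subgroupOf K := QuotientGroup.mk (⟨x, hx⟩ : K) with hq₀
      refine Set.mem_iUnion.2 ⟨q₀, ?_⟩
      have h1 : (Quotient.out q₀)⁻¹ * (⟨x, hx⟩ : K) ∈ H.subgroupOf K := by
        rw [← QuotientGroup.eq]
        exact QuotientGroup.out_eq' _
      rw [Subgroup.mem_subgroupOf] at h1
      refine Set.mem_smul_set_iff_inv_smul_mem.mpr ?_
      have h2 : ((Quotient.out q₀ : K) : G)⁻¹ * x ∈ H := by
        simpa using h1
      refine ⟨h2, ?_⟩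
      exact K.mul_mem (K.inv_mem (Quotient.out q₀).2) hx
    · intro hx
      obtain ⟨q, hq⟩ := Set.mem_iUnion.mp hx
      obtain ⟨w, hw, rfl⟩ := hq
      exact K.mul_mem (Quotient.out q).2 hw.2
  have hdisj : Pairwise (Function.onFun Disjoint s) := by
    intro q q' hne
    refine Set.disjoint_left.mpr fun x hxq hxq' => hne ?_
    have hxK : x ∈ K := by
      obtain ⟨w, hw, rfl⟩ := hxq
      exact K.mul_mem (Quotient.out q).2 hw.2
    rw [hmemq q x hxK hxq, hmemq q' x hxK hxq']
  have hmeas : ∀ q, MeasurableSet (s q) := by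
    intro q
    refine MeasurableSet.const_smul ?_ _
    have h : ((H ⊓ K : Subgroup G) : Set G) = (H : Set G) ∩ (K : Set G) := rfl
    rw [h]
    exact (hH.measurableSet).inter (hK.isClosed.measurableSet)
  rw [hcover, measure_iUnion hdisj hmeas]
  have hsm : ∀ q, μ (s q) = μ ((H ⊓ K : Subgroup G) : Set G) := fun q => measure_smul μ _ _
  simp_rw [hsm]
  haveI := Fintype.ofFinite (K ⧸ H.subgroupOf K)
  rw [tsum_fintype, Finset.sum_const, Finset.card_univ, nsmul_eq_mul]
  congr 1
  rw [Subgroup.relIndex, Subgroup.index, Nat.card_eq_fintype_card]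

/-- The displacement `m(g,V) = |V^g : V ∩ V^g|` of a compact open subgroup `V` under
conjugation by `g`, where `V^g = g⁻¹Vg`. -/
noncomputable def mdisp [Group G] [TopologicalSpace G] (g : G) (V : Subgroup G) : ℕ :=
  Subgroup.relIndex V (V.map (MulAut.conj g⁻¹).toMonoidHom)

/-- The scale `s(g)`: the minimum displacement `m(g,V)` over all compact open
subgroups `V`. -/
noncomputable def scale [Group G] [TopologicalSpace G] (g : G) : ℕ :=
  sInf {n : ℕ | ∃ V : Subgroup G, IsCO V ∧ n = mdisp g V}

lemma key_eq [Group G] [TopologicalSpace G] [IsTopologicalGroup G] [T2Space G]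
    [MeasurableSpace G] [BorelSpace G] (μ : Measure G) [μ.IsHaarMeasure]
    (Δ : G → ℝ) (hΔpos : ∀ g : G, 0 < Δ g)
    (hΔ : ∀ (g : G) (A : Set G), MeasurableSet A →
      μ ((fun x => x * g) '' A) = ENNReal.ofReal (Δ g) * μ A)
    (g : G) (W : Subgroup G) (hW : IsCO W) :
    (mdisp g W : ℝ) = Δ g * (mdisp g⁻¹ W : ℝ) ∧ mdisp g W ≠ 0 ∧ mdisp g⁻¹ W ≠ 0 := by
  set Wg : Subgroup G := W.map (MulAut.conj g⁻¹).toMonoidHom with hWgdef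
  have hfun : ⇑(MulAut.conj g⁻¹).toMonoidHom = fun x => (g⁻¹ * x) * g := by
    funext x; simp [MulAut.conj_apply]
  have hWgset : (Wg : Set G) = (fun x => x * g) '' ((fun x => g⁻¹ * x) '' (W : Set G)) := by
    rw [hWgdef, Subgroup.coe_map, hfun, Set.image_image]
  have hsmul : ((fun x => g⁻¹ * x) '' (W : Set G)) = g⁻¹ • (W : Set G) := rfl
  have hWgco : IsCO Wg := by
    constructor
    · rw [hWgset]
      exact ((hW.1).image (continuous_mul_left g⁻¹)).image (continuous_mul_right g)
    · rw [hWgset]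
      exact (Homeomorph.mulRight g).isOpenMap _ ((Homeomorph.mulLeft g⁻¹).isOpenMap _ hW.2)
  have hmeasA : MeasurableSet ((fun x => g⁻¹ * x) '' (W : Set G)) := by
    rw [hsmul]; exact (hW.2.measurableSet).const_smul g⁻¹
  have hμWg : μ (Wg : Set G) = ENNReal.ofReal (Δ g) * μ (W : Set G) := by
    rw [hWgset, hΔ g _ hmeasA, hsmul, measure_smul μ g⁻¹ _]
  have E2 : μ (Wg : Set G) = (mdisp g W : ℝ≥0∞) * μ ((W ⊓ Wg : Subgroup G) : Set G) :=
    coset_measure μ W Wg hWgco.1 hW.2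
  have hcomap : W.comap (MulAut.conj g⁻¹⁻¹).toMonoidHom = Wg := by
    ext x
    simp only [Subgroup.mem_comap, hWgdef, Subgroup.mem_map, MulAut.conj_apply,
      MulEquiv.coe_toMonoidHom, inv_inv]
    constructor
    · intro h; exact ⟨g * x * g⁻¹, h, by group⟩
    · rintro ⟨w, hw, rfl⟩; convert hw using 1; group
  have hrel : Subgroup.relIndex Wg W = mdisp g⁻¹ W := by
    rw [mdisp, ← hcomap, Subgroup.relIndex_comap]
  have E3 : μ (W : Set G) = (mdisp g⁻¹ W : ℝ≥0∞) * μ ((W ⊓ Wg : Subgroup G) : Set G) := by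
    have h := coset_measure μ Wg W hW.1 hWgco.2
    rw [inf_comm, hrel] at h
    exact h
  have hIopen : IsOpen ((W ⊓ Wg : Subgroup G) : Set G) := by
    have : ((W ⊓ Wg : Subgroup G) : Set G) = (W : Set G) ∩ (Wg : Set G) := rfl
    rw [this]; exact hW.2.inter hWgco.2
  have hI0 : μ ((W ⊓ Wg : Subgroup G) : Set G) ≠ 0 :=
    (hIopen.measure_pos μ ⟨1, Subgroup.one_mem _⟩).ne'
  have hItop : μ ((W ⊓ Wg : Subgroup G) : Set G) ≠ ⊤ := by
    refine (lt_of_le_of_lt (measure_mono ?_) hW.1.measure_lt_top).ne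
    intro x hx; exact hx.1
  have hμW0 : μ (W : Set G) ≠ 0 := (hW.2.measure_pos μ ⟨1, Subgroup.one_mem _⟩).ne'
  have hμWg0 : μ (Wg : Set G) ≠ 0 := (hWgco.2.measure_pos μ ⟨1, Subgroup.one_mem _⟩).ne'
  have hm1 : mdisp g W ≠ 0 := by
    intro h; rw [h] at E2; simp at E2; exact hμWg0 E2
  have hm2 : mdisp g⁻¹ W ≠ 0 := by
    intro h; rw [h] at E3; simp at E3; exact hμW0 E3
  have hEN : (mdisp g W : ℝ≥0∞) = ENNReal.ofReal (Δ g) * (mdisp g⁻¹ W : ℝ≥0∞) := by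
    have h := hμWg
    rw [E2, E3, ← mul_assoc] at h
    exact (ENNReal.mul_left_inj hI0 hItop).mp h
  refine ⟨?_, hm1, hm2⟩
  have h := congrArg ENNReal.toReal hEN
  simpa [ENNReal.toReal_mul, ENNReal.toReal_ofReal (hΔpos g).le] using h

/-- If `V` is a compact open subgroup that is minimizing for `g` (i.e. realizes the
scale `s(g)`), then the modular function satisfies `Δ(g) = s(g)/s(g⁻¹)`. -/
theorem stmt_15 [Group G] [TopologicalSpace G] [IsTopologicalGroup G]
    [LocallyCompactSpace G] [TotallyDisconnectedSpace G] [T2Space G]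
    [MeasurableSpace G] [BorelSpace G] (μ : Measure G) [μ.IsHaarMeasure]
    (Δ : G → ℝ) (hΔpos : ∀ g : G, 0 < Δ g)
    (hΔ : ∀ (g : G) (A : Set G), MeasurableSet A →
      μ ((fun x => x * g) '' A) = ENNReal.ofReal (Δ g) * μ A)
    (g : G) (V : Subgroup G) (hV : IsCO V) (hmin : mdisp g V = scale g) :
    Δ g = (scale g : ℝ) / (scale g⁻¹ : ℝ) := by
  obtain ⟨hkV, hm1V, hm2V⟩ := key_eq μ Δ hΔpos hΔ g V hV
  have hscale_le : ∀ W : Subgroup G, IsCO W → scale g ≤ mdisp g W :=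
    fun W hW => Nat.sInf_le ⟨W, hW, rfl⟩
  have h2 : scale g⁻¹ = mdisp g⁻¹ V := by
    refine le_antisymm (Nat.sInf_le ⟨V, hV, rfl⟩) (le_csInf ⟨_, V, hV, rfl⟩ ?_)
    rintro b ⟨W, hW, rfl⟩
    obtain ⟨hkW, -, -⟩ := key_eq μ Δ hΔpos hΔ g W hW
    have h3 : (mdisp g V : ℝ) ≤ (mdisp g W : ℝ) := by
      exact_mod_cast hmin ▸ hscale_le W hW
    rw [hkV, hkW] at h3
    exact_mod_cast le_of_mul_le_mul_left h3 (hΔpos g)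
  have hne : (mdisp g⁻¹ V : ℝ) ≠ 0 := Nat.cast_ne_zero.mpr hm2V
  rw [← hmin, h2, hkV, mul_div_assoc, div_self hne, mul_one]
end

section
/- Let G be a compactly generated t.d.l.c. group, U ≤ G a compact open subgroup, and S = {s₁,…,s_k} ⊆ G a finite symmetric set such that U ∪ S generates G. Let V_i = s_iU·(s_iU)⁻¹ = s_iUs_i⁻¹ and V = U ∩ ⋂_i V_i. Then for left cosets A, B of U, the pair (A,B) is an edge of the Cayley–Abels graph (i.e., A = gU and B = g s_i U for some g ∈ G and i ≤ k) if and only if there exist i ≤ k, a left coset P of V and a left coset Q of V_i with P ⊆ A, P ⊆ Q, and B = Q·(s_iU). -/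
open Pointwise

private lemma singleton_mul_subgroup_eq {G : Type*} [Group G] (H : Subgroup G)
    {a c : G} (hc : c ∈ ({a} : Set G) * (H : Set G)) :
    ({c} : Set G) * (H : Set G) = {a} * (H : Set G) := by
  rw [Set.singleton_mul, Set.singleton_mul] at *
  show c • (H : Set G) = a • (H : Set G)
  rw [leftCoset_eq_iff]
  have h : c ∈ a • (H : Set G) := hc
  rw [mem_leftCoset_iff] at h
  simpa using H.inv_mem h

private lemma conj_coset_mul {G : Type*} [Group G] (U : Subgroup G) (d s : G) :
    ({d} : Set G) * ((U.map (MulAut.conj s).toMonoidHom : Subgroup G) : Set G) *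
      (({s} : Set G) * (U : Set G)) = {d} * ({s} * (U : Set G)) := by
  ext y
  simp only [Set.mem_mul, Set.mem_singleton_iff, Subgroup.coe_map,
    MulEquiv.coe_toMonoidHom, MulAut.conj_apply, Set.mem_image, SetLike.mem_coe]
  constructor
  · rintro ⟨w, ⟨z, hz, v, ⟨u, hu, rfl⟩, rfl⟩, t, ⟨z', hz', u', hu', rfl⟩, rfl⟩
    refine ⟨z, hz, z' * (u * u'), ⟨z', hz', u * u', U.mul_mem hu hu', rfl⟩, ?_⟩
    rw [hz']; group
  · rintro ⟨z, hz, t, ⟨z', hz', u, hu, rfl⟩, rfl⟩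
    refine ⟨z * (s * 1 * s⁻¹), ⟨z, hz, s * 1 * s⁻¹, ⟨1, U.one_mem, rfl⟩, rfl⟩,
      z' * u, ⟨z', hz', u, hu, rfl⟩, ?_⟩
    rw [hz']; group

/-- Cayley–Abels graph edge characterization. Let `G` be a compactly generated
t.d.l.c. group, `U` a compact open subgroup and `S` a finite symmetric set with
`U ∪ S` generating `G`. Put `V_s = sUs⁻¹` and `V = U ∩ ⋂_{s∈S} V_s`. Then for left
cosets `A, B` of `U`: `(A,B)` is an edge of the Cayley–Abels graph (i.e. `A = gU`,
`B = gsU` for some `g ∈ G`, `s ∈ S`) iff there are `s ∈ S`, a left coset `P` of `V`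
and a left coset `Q` of `V_s` with `P ⊆ A`, `P ⊆ Q` and `B = Q·(sU)`. -/
theorem stmt_17 {G : Type*} [Group G] [TopologicalSpace G] [IsTopologicalGroup G]
    [LocallyCompactSpace G] [TotallyDisconnectedSpace G] [T2Space G]
    (U : Subgroup G) (hUc : IsCompact (U : Set G)) (hUo : IsOpen (U : Set G))
    (S : Finset G) (hsym : ∀ s ∈ S, s⁻¹ ∈ S)
    (hgen : Subgroup.closure ((U : Set G) ∪ (S : Set G)) = ⊤)
    (A B : Set G) (hA : ∃ a : G, A = {a} * (U : Set G))
    (hB : ∃ b : G, B = {b} * (U : Set G)) :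
    (∃ g : G, ∃ s ∈ S, A = {g} * (U : Set G) ∧ B = {g} * ({s} * (U : Set G))) ↔
    (∃ s ∈ S, ∃ c d : G,
      {c} * ((U ⊓ ⨅ t ∈ S, U.map (MulAut.conj t).toMonoidHom : Subgroup G) : Set G)
        ⊆ A ∧
      {c} * ((U ⊓ ⨅ t ∈ S, U.map (MulAut.conj t).toMonoidHom : Subgroup G) : Set G)
        ⊆ {d} * ((U.map (MulAut.conj s).toMonoidHom : Subgroup G) : Set G) ∧
      B = ({d} * ((U.map (MulAut.conj s).toMonoidHom : Subgroup G) : Set G)) *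
        ({s} * (U : Set G))) := by
  set V : Subgroup G := U ⊓ ⨅ t ∈ S, U.map (MulAut.conj t).toMonoidHom with hV
  constructor
  · rintro ⟨g, s, hs, rfl, rfl⟩
    refine ⟨s, hs, g, g, ?_, ?_, ?_⟩
    · exact Set.mul_subset_mul_left (by exact_mod_cast inf_le_left)
    · refine Set.mul_subset_mul_left ?_
      have h : V ≤ U.map (MulAut.conj s).toMonoidHom :=
        le_trans inf_le_right (le_trans (iInf_le _ s) (iInf_le _ hs))
      exact_mod_cast h
    · exact (conj_coset_mul U g s).symm
  · rintro ⟨s, hs, c, d, hcA, hcd, rfl⟩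
    have hcmem : c ∈ ({c} : Set G) * (V : Set G) :=
      ⟨c, rfl, 1, V.one_mem, mul_one c⟩
    obtain ⟨a, rfl⟩ := hA
    have hAeq : ({c} : Set G) * (U : Set G) = {a} * (U : Set G) :=
      singleton_mul_subgroup_eq U (hcA hcmem)
    have hQ : ({c} : Set G) * ((U.map (MulAut.conj s).toMonoidHom : Subgroup G) : Set G)
        = {d} * ((U.map (MulAut.conj s).toMonoidHom : Subgroup G) : Set G) :=
      singleton_mul_subgroup_eq _ (hcd hcmem)
    exact ⟨c, s, hs, hAeq.symm, by rw [← hQ, conj_coset_mul]⟩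
end

section
/- Let p be prime and let W be the meet groupoid of ℚ_p, with subgroups U_r = p^{-r}ℤ_p and cosets D_{r,a} = π_r⁻¹(a) for a in the Prüfer group, where the shift S is the automorphism of W induced by x ↦ px (so S(D_{r,a}) = D_{r+1,a}). Then for B a coset of U_r and C a coset of U_{r+1}: C = S(B) if and only if there exists a coset D of U_{r+1} with D ⊆ B and D^p = C (where D^p denotes the p-fold product D·D·…·D in the coset group of U_{r+1}). -/
open Pointwise

/-- The compact open subgroup `U_r = p^r ℤ_p = {x ∈ ℚ_p : ‖x‖ ≤ p^{-r}}` of `ℚ_p`,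
as a set, for `r : ℤ`. -/
def Ur (p : ℕ) [Fact p.Prime] (r : ℤ) : Set ℚ_[p] :=
  {x : ℚ_[p] | ‖x‖ ≤ (p : ℝ) ^ (-r)}

/-- The `n`-fold pointwise sum `D + D + ⋯ + D` (`n` summands) of a set. -/
def nfoldSum {α : Type*} [Add α] [Zero α] : ℕ → Set α → Set α
  | 0, _ => {0}
  | n + 1, D => D + nfoldSum n D

variable {p : ℕ} [Fact p.Prime]

lemma mem_coset {r : ℤ} {a x : ℚ_[p]} :
    x ∈ ({a} : Set ℚ_[p]) + Ur p r ↔ ‖x - a‖ ≤ (p : ℝ) ^ (-r) := by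
  constructor
  · rintro ⟨u, hu, v, hv, rfl⟩
    simp only [Set.mem_singleton_iff] at hu; subst hu
    have h2 : u + v - u = v := by ring
    rw [h2]; exact hv
  · intro h
    exact ⟨a, rfl, x - a, h, by ring⟩

lemma self_mem_coset {r : ℤ} (a : ℚ_[p]) : a ∈ ({a} : Set ℚ_[p]) + Ur p r := by
  rw [mem_coset]
  simp only [sub_self, norm_zero]
  positivity

lemma coset_eq_s19 {r : ℤ} {a b : ℚ_[p]} (h : ‖a - b‖ ≤ (p : ℝ) ^ (-r)) :
    ({a} : Set ℚ_[p]) + Ur p r = ({b} : Set ℚ_[p]) + Ur p r := by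
  ext x
  rw [mem_coset, mem_coset]
  constructor <;> intro hx
  · calc ‖x - b‖ = ‖(x - a) + (a - b)‖ := by ring_nf
    _ ≤ max ‖x - a‖ ‖a - b‖ := Padic.nonarchimedean _ _
    _ ≤ _ := max_le hx h
  · have h' : ‖b - a‖ ≤ (p : ℝ) ^ (-r) := by rwa [← norm_neg, neg_sub] at h
    calc ‖x - a‖ = ‖(x - b) + (b - a)‖ := by ring_nf
    _ ≤ max ‖x - b‖ ‖b - a‖ := Padic.nonarchimedean _ _
    _ ≤ _ := max_le hx h'

lemma coset_add {r : ℤ} (a b : ℚ_[p]) :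
    (({a} : Set ℚ_[p]) + Ur p r) + (({b} : Set ℚ_[p]) + Ur p r)
      = ({a + b} : Set ℚ_[p]) + Ur p r := by
  ext x
  constructor
  · rintro ⟨u, hu, v, hv, rfl⟩
    rw [mem_coset] at hu hv ⊢
    calc ‖u + v - (a + b)‖ = ‖(u - a) + (v - b)‖ := by ring_nf
    _ ≤ max ‖u - a‖ ‖v - b‖ := Padic.nonarchimedean _ _
    _ ≤ _ := max_le hu hv
  · intro hx
    rw [mem_coset] at hx
    refine ⟨a, self_mem_coset a, x - a, ?_, by ring⟩
    rw [mem_coset]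
    have : x - a - b = x - (a + b) := by ring
    rw [this]; exact hx

lemma nfold_coset {r : ℤ} (δ : ℚ_[p]) (n : ℕ) (hn : 1 ≤ n) :
    nfoldSum n (({δ} : Set ℚ_[p]) + Ur p r) = ({(n : ℚ_[p]) * δ} : Set ℚ_[p]) + Ur p r := by
  induction n with
  | zero => omega
  | succ m ih =>
    rcases Nat.eq_zero_or_pos m with hm | hm
    · subst hm
      show ({δ} : Set ℚ_[p]) + Ur p r + nfoldSum 0 _ = _
      simp [nfoldSum]
    · show ({δ} : Set ℚ_[p]) + Ur p r + nfoldSum m _ = _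
      rw [ih hm, coset_add]
      congr 2
      push_cast
      ring

/-- In the meet groupoid of `ℚ_p`, with `B = β + U_r` a coset of `U_r` and
`C = γ + U_{r+1}` a coset of `U_{r+1}`, and `S` the shift `x ↦ px` (which sends cosets
of `U_r` to cosets of `U_{r+1}`): `C = S(B)` iff there is a coset `D` of `U_{r+1}`
with `D ⊆ B` and `D^p = C`, where `D^p` is the `p`-fold sum in the coset group of
`U_{r+1}`. -/
theorem stmt_19 (p : ℕ) [Fact p.Prime] (r : ℤ) (β γ : ℚ_[p]) :
    ({γ} + Ur p (r + 1)) = (fun x : ℚ_[p] => (p : ℚ_[p]) * x) '' ({β} + Ur p r) ↔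
    ∃ δ : ℚ_[p], ({δ} + Ur p (r + 1)) ⊆ ({β} + Ur p r) ∧
      nfoldSum p ({δ} + Ur p (r + 1)) = ({γ} + Ur p (r + 1)) := by
  have hp : (1:ℝ) < p := by exact_mod_cast (Fact.out : p.Prime).one_lt
  have hp0 : (0:ℝ) < p := by linarith
  have hpq : (p : ℚ_[p]) ≠ 0 := by
    exact_mod_cast (Nat.cast_ne_zero (R := ℚ_[p])).2 (Fact.out : p.Prime).ne_zero
  have key1 : (p:ℝ)⁻¹ * (p:ℝ)^(-r) = (p:ℝ)^(-(r+1)) := by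
    rw [← zpow_neg_one, ← zpow_add₀ hp0.ne']; congr 1; ring
  have key2 : (p:ℝ) * (p:ℝ)^(-(r+1)) = (p:ℝ)^(-r) := by
    rw [show (-r) = 1 + (-(r+1)) by ring, zpow_add₀ hp0.ne', zpow_one]
  have himg : (fun x : ℚ_[p] => (p : ℚ_[p]) * x) '' ({β} + Ur p r)
      = ({(p:ℚ_[p]) * β} : Set ℚ_[p]) + Ur p (r + 1) := by
    ext y
    constructor
    · rintro ⟨x, hx, rfl⟩
      rw [mem_coset] at hx ⊢
      rw [← mul_sub, norm_mul, Padic.norm_p, ← key1]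
      exact mul_le_mul_of_nonneg_left hx (by positivity)
    · intro hy
      rw [mem_coset] at hy
      refine ⟨y / p, ?_, by field_simp⟩
      rw [mem_coset]
      have hyb : y / (p:ℚ_[p]) - β = ((p:ℚ_[p]))⁻¹ * (y - (p:ℚ_[p]) * β) := by
        field_simp
      rw [hyb, norm_mul, norm_inv, Padic.norm_p, inv_inv, ← key2]
      exact mul_le_mul_of_nonneg_left hy hp0.le
  rw [himg]
  constructor
  · intro h
    refine ⟨β, ?_, ?_⟩
    · intro x hx
      rw [mem_coset] at hx ⊢
      calc ‖x - β‖ ≤ (p:ℝ)^(-(r+1)) := hx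
      _ ≤ (p:ℝ)^(-r) := zpow_le_zpow_right₀ hp.le (by omega)
    · rw [nfold_coset β p (Fact.out : p.Prime).one_lt.le, h]
  · rintro ⟨δ, hsub, hsum⟩
    rw [nfold_coset δ p (Fact.out : p.Prime).one_lt.le] at hsum
    have hδβ : ‖δ - β‖ ≤ (p:ℝ)^(-r) := mem_coset.1 (hsub (self_mem_coset δ))
    have h1 : ‖(p:ℚ_[p]) * δ - (p:ℚ_[p]) * β‖ ≤ (p:ℝ)^(-(r+1)) := by
      rw [← mul_sub, norm_mul, Padic.norm_p, ← key1]
      exact mul_le_mul_of_nonneg_left hδβ (by positivity)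
    rw [← hsum]
    exact (coset_eq_s19 (by rwa [← norm_neg, neg_sub] at h1)).symm
end
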